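/- Let S be epsilon-strongly graded by a small groupoid G. Then for every morphism g of G, the sextuple (ε_g R, ε_{g^{-1}} R, S_g, S_{g^{-1}}, m_{g,g^{-1}}, m_{g^{-1},g}) is a set of equivalence data; in particular the multiplication maps m_{g,g^{-1}} : S_g ⊗ S_{g^{-1}} → ε_g R and m_{g^{-1},g} : S_{g^{-1}} ⊗ S_g → ε_{g^{-1}} R are isomorphisms. -/

import Mathlib

/- Setup: a ring `S` graded by a small groupoid.  The groupoid is given by a
`CategoryTheory.Groupoid` structure on a type `Obj` of objects.  Composition
convention: for `g : X ⟶ Y` and `h : Y ⟶ Z`, `g ≫ h : X ⟶ Z`; the grading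
satisfies `S_g · S_h ⊆ S_{g ≫ h}` for composable morphisms and
`S_g · S_h = 0` otherwise, and `S = ⊕_{g} S_g` (an internal direct sum over
the type of all morphisms). -/

open CategoryTheory DirectSum

/-- The type of all morphisms of the groupoid. -/
abbrev MorTot (Obj : Type u) [Groupoid.{v} Obj] : Type (max u v) := Σ X Y : Obj, X ⟶ Y

/-- Product of two additive subgroups of a ring: the additive span of the set of
pairwise products. -/
def aMul {S : Type w} [Ring S] (A B : AddSubgroup S) : AddSubgroup S :=
  AddSubgroup.closure {x : S | ∃ a ∈ A, ∃ b ∈ B, x = a * b}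

/-- A grading of the ring `S` by the groupoid with objects `Obj`. -/
structure GroupoidGrading (Obj : Type u) [Groupoid.{v} Obj] [DecidableEq (MorTot Obj)]
    (S : Type w) [Ring S] where
  comp : ∀ ⦃X Y : Obj⦄, (X ⟶ Y) → AddSubgroup S
  internal : DirectSum.IsInternal (fun g : MorTot Obj => comp g.2.2)
  mul_mem : ∀ ⦃X Y Z : Obj⦄ (g : X ⟶ Y) (h : Y ⟶ Z) ⦃a b : S⦄,
    a ∈ comp g → b ∈ comp h → a * b ∈ comp (g ≫ h)
  mul_eq_zero : ∀ ⦃X Y Z W : Obj⦄ (g : X ⟶ Y) (h : Z ⟶ W), Y ≠ Z →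
    ∀ ⦃a b : S⦄, a ∈ comp g → b ∈ comp h → a * b = 0

variable {Obj : Type u} [Groupoid.{v} Obj] [DecidableEq (MorTot Obj)]
  {S : Type w} [Ring S]

/-- The component `(1_S)_e ∈ S_e` of `1` at the identity morphism of `X`. -/
noncomputable def GroupoidGrading.oneComponent (hS : GroupoidGrading Obj S) (X : Obj) : S :=
  ((Equiv.ofBijective _ hS.internal).symm (1 : S) ⟨X, X, 𝟙 X⟩ : hS.comp (𝟙 X))

/-- `I` is a unital ideal of the (sub)ring `C`. -/
def IsUnitalIdealOf {S : Type w} [Ring S] (I C : AddSubgroup S) : Prop :=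
  I ≤ C ∧ (∀ a ∈ C, ∀ x ∈ I, a * x ∈ I ∧ x * a ∈ I) ∧
    ∃ e ∈ I, ∀ x ∈ I, e * x = x ∧ x * e = x

/-- `S` is epsilon-strongly graded: each `S_g S_{g⁻¹}` is a unital ideal of
`S_{c(g)}` and `S_g S_h = (S_g S_{g⁻¹}) S_{gh} = S_{gh} (S_{h⁻¹} S_h)` for all
composable pairs. -/
def GroupoidGrading.EpsilonStrong {Obj : Type u} [Groupoid.{v} Obj]
    [DecidableEq (MorTot Obj)] {S : Type w} [Ring S]
    (hS : GroupoidGrading Obj S) : Prop :=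
  (∀ ⦃X Y : Obj⦄ (g : X ⟶ Y),
     IsUnitalIdealOf (aMul (hS.comp g) (hS.comp (Groupoid.inv g))) (hS.comp (𝟙 X))) ∧
  (∀ ⦃X Y Z : Obj⦄ (g : X ⟶ Y) (h : Y ⟶ Z),
     aMul (hS.comp g) (hS.comp h)
       = aMul (aMul (hS.comp g) (hS.comp (Groupoid.inv g))) (hS.comp (g ≫ h)) ∧
     aMul (hS.comp g) (hS.comp h)
       = aMul (hS.comp (g ≫ h)) (aMul (hS.comp (Groupoid.inv h)) (hS.comp h)))

/-! The inverse of `m : S_g ⊗ S_{g⁻¹} → S_g S_{g⁻¹}` is `s ↦ ∑ uᵢ ⊗ vᵢ s`, where `∑ uᵢ vᵢ = ε_g`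
is the unit of the ideal `S_g S_{g⁻¹}`: balancedness moves `vᵢ a` across the tensor sign, and
`ε_g a = a` for `a ∈ S_g`. For the latter, comparing `g`-components in `a = a · 1` gives
`a ∈ S_g S_{𝟙 Y}` for `g : X ⟶ Y`, and `S_g S_{𝟙 Y} = ε_g S_g`. Surjectivity onto `S_g S_{g⁻¹}`
holds since pure tensors generate. -/

universe z

section aMul

variable {A B : AddSubgroup S}

lemma aMul_le {K : AddSubgroup S} : aMul A B ≤ K ↔ ∀ a ∈ A, ∀ b ∈ B, a * b ∈ K := by
  rw [aMul, AddSubgroup.closure_le]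
  exact ⟨fun h a ha b hb => h ⟨a, ha, b, hb, rfl⟩,
    fun h _ ⟨a, ha, b, hb, hx⟩ => hx ▸ h a ha b hb⟩

lemma mul_mem_aMul {a b : S} (ha : a ∈ A) (hb : b ∈ B) : a * b ∈ aMul A B :=
  aMul_le.mp le_rfl a ha b hb

lemma exists_sum_mul_of_mem_aMul {x : S} (hx : x ∈ aMul A B) :
    ∃ (n : ℕ) (u : Fin n → A) (v : Fin n → B), x = ∑ i, (u i : S) * v i := by
  induction hx using AddSubgroup.closure_induction with
  | mem x hx =>
    obtain ⟨a, ha, b, hb, rfl⟩ := hx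
    exact ⟨1, fun _ => ⟨a, ha⟩, fun _ => ⟨b, hb⟩, by simp⟩
  | zero => exact ⟨0, Fin.elim0, Fin.elim0, by simp⟩
  | add x y _ _ hx hy =>
    obtain ⟨n, u, v, rfl⟩ := hx
    obtain ⟨n', u', v', rfl⟩ := hy
    exact ⟨n + n', Fin.append u u', Fin.append v v', by simp [Fin.sum_univ_add]⟩
  | neg x _ hx =>
    obtain ⟨n, u, v, rfl⟩ := hx
    exact ⟨n, -u, v, by simp⟩

lemma mul_eq_self_of_mem_aMul {e y : S} (he : ∀ x ∈ A, e * x = x) (hy : y ∈ aMul A B) :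
    e * y = y := by
  have : aMul A B ≤ (AddMonoidHom.mulLeft e - AddMonoidHom.id S).ker :=
    aMul_le.mpr fun a ha b hb => by simp [← mul_assoc, he a ha]
  simpa [sub_eq_zero] using this hy

end aMul

structure IsBalanced {M : Type*} [AddCommGroup M] (A B R : AddSubgroup S) (b : A → B → M) :
    Prop where
  map_add_left : ∀ a a' x, b (a + a') x = b a x + b a' x
  map_add_right : ∀ a x x', b a (x + x') = b a x + b a x'
  balanced : ∀ (a : A) (x : B) (r : S), r ∈ R →
    ∀ (h₁ : (a : S) * r ∈ A) (h₂ : r * (x : S) ∈ B), b ⟨a * r, h₁⟩ x = b a ⟨r * x, h₂⟩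

namespace IsBalanced

variable {A B R : AddSubgroup S} {M : Type*} [AddCommGroup M] {b : A → B → M}

lemma comp_addMonoidHom (hb : IsBalanced A B R b) {N : Type*} [AddCommGroup N] (f : M →+ N) :
    IsBalanced A B R fun a x => f (b a x) where
  map_add_left a a' x := by rw [hb.map_add_left, map_add]
  map_add_right a x x' := by rw [hb.map_add_right, map_add]
  balanced a x r hr h₁ h₂ := by rw [hb.balanced a x r hr h₁ h₂]

lemma map_eq_map_of_coe_eq (hb : IsBalanced A B R b) {r : S} (hr : r ∈ R) {a a' : A}
    {x x' : B} (ha : (a' : S) = a * r) (hx : (x' : S) = r * x) : b a' x = b a x' := by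
  obtain ⟨a', ha'⟩ := a'
  obtain ⟨x', hx'⟩ := x'
  dsimp only at ha hx
  subst ha hx
  exact hb.balanced a x r hr ha' hx'

lemma map_sum_left (hb : IsBalanced A B R b) {ι : Type*} (s : Finset ι) (a : ι → A) (x : B) :
    b (∑ i ∈ s, a i) x = ∑ i ∈ s, b (a i) x :=
  map_sum (AddMonoidHom.mk' (b · x) fun a a' => hb.map_add_left a a' x) a s

end IsBalanced

section Generators

variable {A B R : AddSubgroup S} {T : Type z} [AddCommGroup T] {t : A → B → T}

lemma closure_range_eq_top_of_isBalanced (ht : IsBalanced A B R t)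
    (huniv : ∀ (M : Type z) [AddCommGroup M] (b : A → B → M), IsBalanced A B R b →
      ∃! φ : T →+ M, ∀ a x, φ (t a x) = b a x) :
    AddSubgroup.closure (Set.range (Function.uncurry t)) = ⊤ := by
  set N := AddSubgroup.closure (Set.range (Function.uncurry t))
  obtain ⟨φ, -, huniq⟩ := huniv (T ⧸ N) _ (ht.comp_addMonoidHom (QuotientAddGroup.mk' N))
  have hmk : QuotientAddGroup.mk' N = 0 := by
    refine (huniq _ fun _ _ => rfl).trans (huniq 0 fun a x => ?_).symm
    have : t a x ∈ N :=
      AddSubgroup.subset_closure (Set.mem_range_self (f := Function.uncurry t) (a, x))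
    exact ((QuotientAddGroup.eq_zero_iff _).mpr this).symm
  rw [eq_top_iff]
  intro x _
  simpa using DFunLike.congr_fun hmk x

lemma range_eq_aMul_of_closure_eq_top
    (hgen : AddSubgroup.closure (Set.range (Function.uncurry t)) = ⊤)
    {m : T →+ S} (hm : ∀ a x, m (t a x) = a * x) : Set.range m = aMul A B := by
  rw [← AddMonoidHom.coe_range, AddMonoidHom.range_eq_map, ← hgen, AddMonoidHom.map_closure]
  congr 2
  ext y
  simp [hm, eq_comm]

end Generators

lemma injective_of_leftInverse_on_generators {α β T M : Type*} [AddCommGroup T]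
    [AddCommGroup M] {t : α → β → T}
    (hgen : AddSubgroup.closure (Set.range (Function.uncurry t)) = ⊤) (m : T →+ M) (ψ : M →+ T)
    (hψ : ∀ a x, ψ (m (t a x)) = t a x) : Function.Injective m := by
  have : ψ.comp m = AddMonoidHom.id T :=
    AddMonoidHom.eq_of_eqOn_dense hgen (by rintro _ ⟨⟨a, x⟩, rfl⟩; exact hψ a x)
  exact Function.LeftInverse.injective (DFunLike.congr_fun this)

lemma MorTot.mk_comp_ne_mk {C : Type*} [Groupoid C] {X Y W : C} (g : X ⟶ Y) {h : Y ⟶ W}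
    (hh : (⟨Y, W, h⟩ : MorTot C) ≠ ⟨Y, Y, 𝟙 Y⟩) :
    (⟨X, W, g ≫ h⟩ : MorTot C) ≠ ⟨X, Y, g⟩ := by
  intro heq
  obtain ⟨-, heq⟩ := Sigma.mk.inj_iff.mp heq
  obtain ⟨rfl, heq⟩ := Sigma.mk.inj_iff.mp (eq_of_heq heq)
  have hid : h = 𝟙 _ := (cancel_epi g).mp (by rw [eq_of_heq heq, Category.comp_id])
  exact hh (by rw [hid])

namespace GroupoidGrading

variable (hS : GroupoidGrading Obj S)

lemma mul_mem_of_comp_eq {X Y Z : Obj} {g : X ⟶ Y} {h : Y ⟶ Z} {k : X ⟶ Z} (hk : g ≫ h = k)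
    {a b : S} (ha : a ∈ hS.comp g) (hb : b ∈ hS.comp h) : a * b ∈ hS.comp k :=
  hk ▸ hS.mul_mem g h ha hb

lemma aMul_le_comp {X Y Z : Obj} {g : X ⟶ Y} {h : Y ⟶ Z} {k : X ⟶ Z} (hk : g ≫ h = k) :
    aMul (hS.comp g) (hS.comp h) ≤ hS.comp k :=
  aMul_le.mpr fun _ ha _ hb => hS.mul_mem_of_comp_eq hk ha hb

lemma exists_mul_sub_mul_mem_iSup {X Y : Obj} {g : X ⟶ Y} {a : S} (ha : a ∈ hS.comp g)
    (j : MorTot Obj) {x : S} (hx : x ∈ hS.comp j.2.2) :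
    ∃ u ∈ hS.comp (𝟙 Y),
      a * x - a * u ∈ ⨆ (k : MorTot Obj) (_ : k ≠ ⟨X, Y, g⟩), hS.comp k.2.2 := by
  obtain ⟨Z, W, h⟩ := j
  by_cases hj : (⟨Z, W, h⟩ : MorTot Obj) = ⟨Y, Y, 𝟙 Y⟩
  · cases hj
    exact ⟨x, hx, by simp⟩
  refine ⟨0, zero_mem _, ?_⟩
  rw [mul_zero, sub_zero]
  by_cases hYZ : Y = Z
  · subst hYZ
    have hgh : a * x ∈ hS.comp (⟨X, W, g ≫ h⟩ : MorTot Obj).2.2 := hS.mul_mem g h ha hx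
    exact AddSubgroup.mem_iSup_of_mem _
      (AddSubgroup.mem_iSup_of_mem (MorTot.mk_comp_ne_mk g hj) hgh)
  · rw [hS.mul_eq_zero g h hYZ ha hx]
    exact zero_mem _

lemma exists_mem_id_mul_eq_self {X Y : Obj} {g : X ⟶ Y} {a : S} (ha : a ∈ hS.comp g) :
    ∃ u ∈ hS.comp (𝟙 Y), a * u = a := by
  suffices h : ∀ s : S, ∃ u ∈ hS.comp (𝟙 Y),
      a * s - a * u ∈ ⨆ (k : MorTot Obj) (_ : k ≠ ⟨X, Y, g⟩), hS.comp k.2.2 by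
    obtain ⟨u, hu, hmem⟩ := h 1
    have hmem' : a * 1 - a * u ∈ hS.comp g :=
      sub_mem (by rwa [mul_one]) (hS.mul_mem_of_comp_eq (Category.comp_id g) ha hu)
    have := AddSubgroup.disjoint_def.mp (hS.internal.addSubgroup_iSupIndep _) hmem' hmem
    rw [mul_one, sub_eq_zero] at this
    exact ⟨u, hu, this.symm⟩
  intro s
  obtain ⟨d, rfl⟩ := hS.internal.surjective s
  induction d using DirectSum.induction_on with
  | zero => exact ⟨0, zero_mem _, by simp⟩
  | of j x =>
    rw [DirectSum.coeAddMonoidHom_of]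
    exact hS.exists_mul_sub_mul_mem_iSup ha j x.2
  | add d d' hd hd' =>
    obtain ⟨u, hu, h⟩ := hd
    obtain ⟨u', hu', h'⟩ := hd'
    refine ⟨u + u', add_mem hu hu', ?_⟩
    convert add_mem h h' using 1
    rw [map_add, mul_add, mul_add]
    abel

end GroupoidGrading

namespace GroupoidGrading.EpsilonStrong

variable {hS : GroupoidGrading Obj S}

lemma exists_left_unit (hstr : hS.EpsilonStrong) {X Y : Obj} (g : X ⟶ Y) :
    ∃ e ∈ aMul (hS.comp g) (hS.comp (Groupoid.inv g)), ∀ a ∈ hS.comp g, e * a = a := by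
  obtain ⟨-, -, e, he, hunit⟩ := hstr.1 g
  refine ⟨e, he, fun a ha => ?_⟩
  obtain ⟨u, hu, hau⟩ := hS.exists_mem_id_mul_eq_self ha
  have hfactor := (hstr.2 g (𝟙 Y)).1
  rw [Category.comp_id] at hfactor
  have : a ∈ aMul (aMul (hS.comp g) (hS.comp (Groupoid.inv g))) (hS.comp g) :=
    hfactor ▸ hau ▸ mul_mem_aMul ha hu
  exact mul_eq_self_of_mem_aMul (fun x hx => (hunit x hx).1) this

lemma injective_of_isBalanced (hstr : hS.EpsilonStrong) {X Y : Obj}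
    (g : X ⟶ Y) (g' : Y ⟶ X) (hinv : Groupoid.inv g = g') {T : Type*} [AddCommGroup T]
    {t : hS.comp g → hS.comp g' → T}
    (ht : IsBalanced (hS.comp g) (hS.comp g') (aMul (hS.comp g') (hS.comp g)) t)
    (hgen : AddSubgroup.closure (Set.range (Function.uncurry t)) = ⊤)
    {m : T →+ S} (hm : ∀ a x, m (t a x) = a * x) : Function.Injective m := by
  subst hinv
  obtain ⟨e, he, hea⟩ := hstr.exists_left_unit g
  obtain ⟨n, u, v, rfl⟩ := exists_sum_mul_of_mem_aMul he
  have hmX : ∀ y, m y ∈ hS.comp (𝟙 X) := fun y => hS.aMul_le_comp (Groupoid.comp_inv g) <| by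
    rw [← SetLike.mem_coe, ← range_eq_aMul_of_closure_eq_top hgen hm]
    exact ⟨y, rfl⟩
  let ψ : hS.comp (𝟙 X) →+ T := AddMonoidHom.mk'
    (fun s => ∑ i, t (u i) ⟨v i * s, hS.mul_mem_of_comp_eq (Category.comp_id _) (v i).2 s.2⟩)
    fun s s' => by
      rw [← Finset.sum_add_distrib]
      refine Finset.sum_congr rfl fun i _ => ?_
      rw [← ht.map_add_right]
      congr 1
      exact Subtype.ext (mul_add _ _ _)
  refine fun y y' hy => injective_of_leftInverse_on_generators hgen (m.codRestrict _ hmX) ψ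
    (fun a x => ?_) (Subtype.ext hy)
  have huva : ∀ i, (u i : S) * (v i * a) ∈ hS.comp g := fun i =>
    hS.mul_mem_of_comp_eq (Category.comp_id g) (u i).2
      (hS.mul_mem_of_comp_eq (Groupoid.inv_comp g) (v i).2 a.2)
  have hsum : ∑ i, (⟨u i * (v i * a), huva i⟩ : hS.comp g) = a := by
    refine Subtype.ext ?_
    simp only [AddSubgroup.val_finsetSum, ← mul_assoc, ← Finset.sum_mul]
    exact hea a a.2
  calc ψ (m.codRestrict _ hmX (t a x))
      = ∑ i, t ⟨u i * (v i * a), huva i⟩ x := by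
        show ∑ i, t (u i) _ = _
        refine Finset.sum_congr rfl fun i _ => ?_
        refine (ht.map_eq_map_of_coe_eq (mul_mem_aMul (v i).2 a.2) rfl ?_).symm
        simp [hm, mul_assoc]
    _ = t a x := by rw [← ht.map_sum_left, hsum]

end GroupoidGrading.EpsilonStrong

/-- The tensor products `S_g ⊗_{ε_{g⁻¹}R} S_{g⁻¹}` and `S_{g⁻¹} ⊗_{ε_g R} S_g` are encoded by
their universal property (`T`, `t` resp. `T'`, `t'`), and the multiplication maps `m`, `m'` by
`m (t a b) = a * b`, `m' (t' b a) = b * a`. -/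
theorem equivalence_data_of_epsilonStrong (hS : GroupoidGrading Obj S)
    (hstr : hS.EpsilonStrong) {X Y : Obj} (g : X ⟶ Y)
    (T : Type w) [AddCommGroup T]
    (t : hS.comp g → hS.comp (Groupoid.inv g) → T)
    (tadd₁ : ∀ a a' b, t (a + a') b = t a b + t a' b)
    (tadd₂ : ∀ a b b', t a (b + b') = t a b + t a b')
    (tbal : ∀ (a : hS.comp g) (b : hS.comp (Groupoid.inv g)) (r : S),
      r ∈ aMul (hS.comp (Groupoid.inv g)) (hS.comp g) →
      ∀ (h₁ : (a : S) * r ∈ hS.comp g) (h₂ : r * (b : S) ∈ hS.comp (Groupoid.inv g)),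
        t ⟨(a : S) * r, h₁⟩ b = t a ⟨r * (b : S), h₂⟩)
    (tuniv : ∀ (M : Type w) [AddCommGroup M]
      (b : hS.comp g → hS.comp (Groupoid.inv g) → M),
      (∀ a a' x, b (a + a') x = b a x + b a' x) →
      (∀ a x x', b a (x + x') = b a x + b a x') →
      (∀ (a : hS.comp g) (x : hS.comp (Groupoid.inv g)) (r : S),
        r ∈ aMul (hS.comp (Groupoid.inv g)) (hS.comp g) →
        ∀ (h₁ : (a : S) * r ∈ hS.comp g) (h₂ : r * (x : S) ∈ hS.comp (Groupoid.inv g)),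
          b ⟨(a : S) * r, h₁⟩ x = b a ⟨r * (x : S), h₂⟩) →
      ∃! φ : T →+ M, ∀ a x, φ (t a x) = b a x)
    (T' : Type w) [AddCommGroup T']
    (t' : hS.comp (Groupoid.inv g) → hS.comp g → T')
    (t'add₁ : ∀ a a' b, t' (a + a') b = t' a b + t' a' b)
    (t'add₂ : ∀ a b b', t' a (b + b') = t' a b + t' a b')
    (t'bal : ∀ (a : hS.comp (Groupoid.inv g)) (b : hS.comp g) (r : S),
      r ∈ aMul (hS.comp g) (hS.comp (Groupoid.inv g)) →
      ∀ (h₁ : (a : S) * r ∈ hS.comp (Groupoid.inv g)) (h₂ : r * (b : S) ∈ hS.comp g),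
        t' ⟨(a : S) * r, h₁⟩ b = t' a ⟨r * (b : S), h₂⟩)
    (t'univ : ∀ (M : Type w) [AddCommGroup M]
      (b : hS.comp (Groupoid.inv g) → hS.comp g → M),
      (∀ a a' x, b (a + a') x = b a x + b a' x) →
      (∀ a x x', b a (x + x') = b a x + b a x') →
      (∀ (a : hS.comp (Groupoid.inv g)) (x : hS.comp g) (r : S),
        r ∈ aMul (hS.comp g) (hS.comp (Groupoid.inv g)) →
        ∀ (h₁ : (a : S) * r ∈ hS.comp (Groupoid.inv g)) (h₂ : r * (x : S) ∈ hS.comp g),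
          b ⟨(a : S) * r, h₁⟩ x = b a ⟨r * (x : S), h₂⟩) →
      ∃! φ : T' →+ M, ∀ a x, φ (t' a x) = b a x)
    (m : T →+ S) (hm : ∀ a b, m (t a b) = (a : S) * (b : S))
    (m' : T' →+ S) (hm' : ∀ b a, m' (t' b a) = (b : S) * (a : S)) :
    (∀ (a a' : hS.comp g) (b : hS.comp (Groupoid.inv g)),
      m (t a b) * (a' : S) = (a : S) * m' (t' b a')) ∧
    (∀ (b b' : hS.comp (Groupoid.inv g)) (a : hS.comp g),
      m' (t' b a) * (b' : S) = (b : S) * m (t a b')) ∧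
    Function.Injective m ∧
    Set.range m = ↑(aMul (hS.comp g) (hS.comp (Groupoid.inv g))) ∧
    Function.Injective m' ∧
    Set.range m' = ↑(aMul (hS.comp (Groupoid.inv g)) (hS.comp g)) := by
  have hgen := closure_range_eq_top_of_isBalanced ⟨tadd₁, tadd₂, tbal⟩
    fun M _ b hb => tuniv M b hb.map_add_left hb.map_add_right hb.balanced
  have hgen' := closure_range_eq_top_of_isBalanced ⟨t'add₁, t'add₂, t'bal⟩
    fun M _ b hb => t'univ M b hb.map_add_left hb.map_add_right hb.balanced
  refine ⟨fun a a' b => by rw [hm, hm', mul_assoc], fun b b' a => by rw [hm', hm, mul_assoc],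
    hstr.injective_of_isBalanced g _ rfl ⟨tadd₁, tadd₂, tbal⟩ hgen hm,
    range_eq_aMul_of_closure_eq_top hgen hm,
    hstr.injective_of_isBalanced _ g (by simp) ⟨t'add₁, t'add₂, t'bal⟩ hgen' hm',
    range_eq_aMul_of_closure_eq_top hgen' hm'⟩
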